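/- arXiv:2007.10537 — 3 statements merged into one kernel-verified Lean document; each statement's English description precedes it below -/
import Mathlib

section
/- Let G be a simple graph on the vertex set {0, 1, ..., n−1} containing all outer-cycle edges {l, l+1 mod n}, with positive integer capacities u(e) on its edges, and let (s_1,t_1), ..., (s_k,t_k) be demand pairs such that the edges of G together with the demand pairs are pairwise non-crossing chords of the circular order. Suppose the cut condition holds: for every subset X of vertices, the number of indices m with exactly one of s_m, t_m in X is at most u(δ_G(X)). Suppose some demand pair equals {v_i, v_j} with i < j and no vertex v_l with i < l < j is an endpoint of any demand pair. Let u' be obtained from u by decreasing the capacity of each of the edges {i,i+1}, {i+1,i+2}, ..., {j−1,j} by one, and let the demand list be obtained by deleting that demand. Then the cut condition still holds for the capacities u' and the reduced demand list. -/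
open SimpleGraph
open scoped Classical

/-- A set of edges (chords) on the circularly ordered vertex set `{0, …, n-1}` is
non-crossing if no two of its chords `{a,b}` and `{c,d}` satisfy `a < c < b < d`. -/
def NonCrossing (n : ℕ) (E : Set (Sym2 (Fin n))) : Prop :=
  ∀ a b c d : Fin n, a < c → c < b → b < d → s(a, b) ∈ E → s(c, d) ∈ E → False

/-- The total `u`-capacity of the cut `δ_G(X)`: the sum of `u e` over the edges `e` of `G`
having exactly one endpoint in `X`. -/
noncomputable def cutWeight {n : ℕ} (G : SimpleGraph (Fin n))
    (u : Sym2 (Fin n) → ℕ) (X : Set (Fin n)) : ℕ :=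
  ∑ e ∈ Finset.univ.filter
      (fun e : Sym2 (Fin n) =>
        e ∈ G.edgeSet ∧ ∃ a b : Fin n, e = s(a, b) ∧ a ∈ X ∧ b ∉ X),
    u e

/-- The cut condition: for every set `X` of vertices, the number of demands separated
by the cut `δ(X)` is at most the capacity of the cut in `G`. -/
def CutCondition {n : ℕ} (G : SimpleGraph (Fin n)) (u : Sym2 (Fin n) → ℕ)
    {ι : Type} [Fintype ι] (sdem tdem : ι → Fin n) : Prop :=
  ∀ X : Set (Fin n),
    (Finset.univ.filter
        (fun i : ι => (sdem i ∈ X ∧ tdem i ∉ X) ∨ (sdem i ∉ X ∧ tdem i ∈ X))).card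
      ≤ cutWeight G u X

/-!
Splitting `X` into two parts with no edge of `G` between them adds up the capacities of the
cuts and at most adds up the numbers of separated demands, and complementing `X` changes
neither. Since the outer cycle makes `G` connected, induction on `|δ(X)|` therefore reduces the
cut condition to central cuts, where both `X` and its complement induce connected subgraphs; as
the edges of `G` do not cross, such an `X` is an arc of the circle.

Let `T` be the set of edges of the path `i, i + 1, …, j` in `δ(X)`; the capacity of `δ(X)`
drops by at most `|T|`. If `T` is empty there is nothing to show. If `T` is a single edge,
`X` separates `i` from `j`, so the deleted demand was separated by `X` as well. If `|T| ≥ 2`,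
the arc `X` has both ends on the path, so all vertices outside `(i, j)`, in particular all
terminals, lie on the same side and no remaining demand is separated.
-/

open Finset

section Reachability

variable {V : Type*} (G : SimpleGraph V)

def ReachableWithin (X : Set V) : V → V → Prop :=
  Relation.ReflTransGen fun a b => a ∈ X ∧ b ∈ X ∧ G.Adj a b

def IsCentralCut (X : Set V) : Prop :=
  (∀ a ∈ X, ∀ b ∈ X, ReachableWithin G X a b) ∧ ∀ a ∉ X, ∀ b ∉ X, ReachableWithin G Xᶜ a b

variable {G}

theorem IsCentralCut.compl {X : Set V} (h : IsCentralCut G X) : IsCentralCut G Xᶜ := by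
  refine ⟨h.2, fun a ha b hb => ?_⟩
  rw [compl_compl]
  exact h.1 a (Set.notMem_compl_iff.1 ha) b (Set.notMem_compl_iff.1 hb)

theorem exists_split_of_not_reachableWithin {X : Set V} {a b : V} (ha : a ∈ X) (hb : b ∈ X)
    (hab : ¬ReachableWithin G X a b) :
    ∃ X₁ X₂ : Set V, X₁ ∪ X₂ = X ∧ Disjoint X₁ X₂ ∧ (∀ v ∈ X₁, ∀ w ∈ X₂, ¬G.Adj v w) ∧
      X₁.Nonempty ∧ X₂.Nonempty := by
  refine ⟨{v ∈ X | ReachableWithin G X a v}, {v ∈ X | ¬ReachableWithin G X a v},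
    ?_, ?_, ?_, ⟨a, ha, .refl⟩, ⟨b, hb, hab⟩⟩
  · rw [← Set.sep_or]
    simp only [em, and_true, Set.ofPred_mem_eq]
  · exact Set.disjoint_left.2 fun v hv₁ hv₂ => hv₂.2 hv₁.2
  · exact fun v hv w hw hvw => hw.2 (hv.2.tail ⟨hv.1, hw.1, hvw⟩)

theorem ReachableWithin.exists_adj_lt_lt [LinearOrder V] {X : Set V} {v w m : V}
    (h : ReachableWithin G X v w) (hm : m ∉ X) (hvm : v < m) (hmw : m < w) :
    ∃ x y, x ∈ X ∧ y ∈ X ∧ G.Adj x y ∧ x < m ∧ m < y := by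
  induction h with
  | refl => exact absurd (hvm.trans hmw) (lt_irrefl v)
  | @tail b c _ hbc ih =>
    rcases lt_trichotomy b m with hbm | rfl | hmb
    · exact ⟨b, c, hbc.1, hbc.2.1, hbc.2.2, hbm, hmw⟩
    · exact absurd hbc.1 hm
    · exact ih hmb

end Reachability

theorem NonCrossing.mono {n : ℕ} {E F : Set (Sym2 (Fin n))} (hEF : E ⊆ F)
    (hF : NonCrossing n F) : NonCrossing n E :=
  fun a b c d hac hcb hbd hab hcd => hF a b c d hac hcb hbd (hEF hab) (hEF hcd)

variable {n : ℕ} {G : SimpleGraph (Fin n)}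

theorem ReachableWithin.mem_Ioo (hnc : NonCrossing n G.edgeSet) {S : Set (Fin n)}
    {x y v w : Fin n} (hxy : G.Adj x y) (hx : x ∉ S) (hy : y ∉ S)
    (h : ReachableWithin G S v w) (hv : v ∈ Set.Ioo x y) : w ∈ Set.Ioo x y := by
  induction h with
  | refl => exact hv
  | @tail b c _ hbc ih =>
    obtain ⟨hxb, hby⟩ := ih
    rcases lt_trichotomy x c with hxc | rfl | hcx
    · rcases lt_trichotomy c y with hcy | rfl | hyc
      · exact ⟨hxc, hcy⟩
      · exact absurd hbc.2.1 hy
      · exact (hnc x y b c hxb hby hyc hxy hbc.2.2).elim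
    · exact absurd hbc.2.1 hx
    · exact (hnc c b x y hcx hxb hby hbc.2.2.symm hxy).elim

theorem IsCentralCut.not_alternating_of_mem (hnc : NonCrossing n G.edgeSet) {X : Set (Fin n)}
    (hX : IsCentralCut G X) {a b c d : Fin n} (hab : a < b) (hbc : b < c) (hcd : c < d)
    (ha : a ∈ X) (hb : b ∉ X) (hc : c ∈ X) (hd : d ∉ X) : False := by
  obtain ⟨x, y, hx, hy, hxy, hxb, hby⟩ := (hX.1 a ha c hc).exists_adj_lt_lt hb hab hbc
  obtain ⟨z, w, hz, hw, hzw, hzc, hcw⟩ :=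
    (hX.2 b hb d hd).exists_adj_lt_lt (not_not.2 hc) hbc hcd
  have hwy : w < y :=
    ((hX.2 b hb w hw).mem_Ioo hnc hxy (not_not.2 hx) (not_not.2 hy) ⟨hxb, hby⟩).2
  have hyw : y < w := ((hX.1 c hc y hy).mem_Ioo hnc hzw hz hw ⟨hzc, hcw⟩).2
  exact lt_asymm hwy hyw

theorem IsCentralCut.not_alternating (hnc : NonCrossing n G.edgeSet) {X : Set (Fin n)}
    (hX : IsCentralCut G X) {a b c d : Fin n} (hab : a < b) (hbc : b < c) (hcd : c < d) :
    (a ∈ X ↔ b ∈ X) ∨ (b ∈ X ↔ c ∈ X) ∨ (c ∈ X ↔ d ∈ X) := by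
  by_cases ha : a ∈ X
  · by_contra! h
    exact hX.not_alternating_of_mem hnc hab hbc hcd ha (by tauto) (by tauto) (by tauto)
  · by_contra! h
    exact hX.compl.not_alternating_of_mem hnc hab hbc hcd ha (by tauto) (by tauto) (by tauto)

noncomputable def cutEdges (G : SimpleGraph (Fin n)) (X : Set (Fin n)) : Finset (Sym2 (Fin n)) :=
  Finset.univ.filter fun e => e ∈ G.edgeSet ∧ ∃ a b : Fin n, e = s(a, b) ∧ a ∈ X ∧ b ∉ X

theorem cutWeight_eq_sum_cutEdges (u : Sym2 (Fin n) → ℕ) (X : Set (Fin n)) :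
    cutWeight G u X = ∑ e ∈ cutEdges G X, u e :=
  rfl

@[simp]
theorem mk_mem_cutEdges {X : Set (Fin n)} {a b : Fin n} :
    s(a, b) ∈ cutEdges G X ↔ G.Adj a b ∧ ¬(a ∈ X ↔ b ∈ X) := by
  simp only [cutEdges, mem_filter, mem_univ, true_and, SimpleGraph.mem_edgeSet, Sym2.eq_iff]
  constructor
  · rintro ⟨hab, x, y, (⟨rfl, rfl⟩ | ⟨rfl, rfl⟩), hx, hy⟩ <;> tauto
  · rintro ⟨hab, hX⟩
    by_cases ha : a ∈ X
    · exact ⟨hab, a, b, .inl ⟨rfl, rfl⟩, ha, by tauto⟩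
    · exact ⟨hab, b, a, .inr ⟨rfl, rfl⟩, by tauto, ha⟩

theorem cutEdges_compl (X : Set (Fin n)) : cutEdges G Xᶜ = cutEdges G X := by
  ext e
  induction e using Sym2.ind
  simp only [mk_mem_cutEdges, Set.mem_compl_iff]
  tauto

theorem cutEdges_union {X₁ X₂ : Set (Fin n)} (hadj : ∀ v ∈ X₁, ∀ w ∈ X₂, ¬G.Adj v w) :
    cutEdges G (X₁ ∪ X₂) = cutEdges G X₁ ∪ cutEdges G X₂ := by
  ext e
  induction e using Sym2.ind with | _ a b => ?_
  have := hadj a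
  have := hadj b
  simp only [mem_union, mk_mem_cutEdges, Set.mem_union] at *
  tauto

theorem disjoint_cutEdges {X₁ X₂ : Set (Fin n)} (hd : Disjoint X₁ X₂)
    (hadj : ∀ v ∈ X₁, ∀ w ∈ X₂, ¬G.Adj v w) : Disjoint (cutEdges G X₁) (cutEdges G X₂) := by
  refine Finset.disjoint_left.2 fun e he₁ he₂ => ?_
  induction e using Sym2.ind with | _ a b => ?_
  have ha : a ∈ X₁ → a ∉ X₂ := fun h => Set.disjoint_left.1 hd h
  have hb : b ∈ X₁ → b ∉ X₂ := fun h => Set.disjoint_left.1 hd h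
  have := hadj a
  have := hadj b
  simp only [mk_mem_cutEdges] at *
  tauto

theorem cutEdges_nonempty (hG : G.Preconnected) {X : Set (Fin n)} {a b : Fin n} (ha : a ∈ X)
    (hb : b ∉ X) : (cutEdges G X).Nonempty := by
  obtain ⟨d, -, hd₁, hd₂⟩ := (hG a b).some.exists_boundary_dart X ha hb
  exact ⟨s(d.fst, d.snd), mk_mem_cutEdges.2 ⟨d.adj, by tauto⟩⟩

theorem cutWeight_compl (u : Sym2 (Fin n) → ℕ) (X : Set (Fin n)) :
    cutWeight G u Xᶜ = cutWeight G u X := by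
  simp only [cutWeight_eq_sum_cutEdges, cutEdges_compl]

theorem cutWeight_union (u : Sym2 (Fin n) → ℕ) {X₁ X₂ : Set (Fin n)} (hd : Disjoint X₁ X₂)
    (hadj : ∀ v ∈ X₁, ∀ w ∈ X₂, ¬G.Adj v w) :
    cutWeight G u (X₁ ∪ X₂) = cutWeight G u X₁ + cutWeight G u X₂ := by
  simp only [cutWeight_eq_sum_cutEdges, cutEdges_union hadj,
    sum_union (disjoint_cutEdges hd hadj)]

theorem card_cutEdges_lt_union (hG : G.Preconnected) {X₁ X₂ : Set (Fin n)}
    (hd : Disjoint X₁ X₂) (hadj : ∀ v ∈ X₁, ∀ w ∈ X₂, ¬G.Adj v w) (h₁ : X₁.Nonempty)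
    (h₂ : X₂.Nonempty) : #(cutEdges G X₁) < #(cutEdges G (X₁ ∪ X₂)) := by
  obtain ⟨a, ha⟩ := h₁
  obtain ⟨b, hb⟩ := h₂
  have := (cutEdges_nonempty hG hb (Set.disjoint_left.1 hd ha)).card_pos
  rw [cutEdges_union hadj, card_union_of_disjoint (disjoint_cutEdges hd hadj)]
  omega

theorem cutWeight_le_cutWeight_sub_add (u : Sym2 (Fin n) → ℕ) (p : Sym2 (Fin n) → Prop)
    [DecidablePred p] (X : Set (Fin n)) :
    cutWeight G u X ≤
      cutWeight G (fun e => if p e then u e - 1 else u e) X + #((cutEdges G X).filter p) := by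
  rw [cutWeight_eq_sum_cutEdges, cutWeight_eq_sum_cutEdges, card_filter, ← sum_add_distrib]
  refine sum_le_sum fun e _ => ?_
  split_ifs <;> omega

section SepCount

variable {ι : Type} [Fintype ι] (s t : ι → Fin n)

noncomputable def sepCount (X : Set (Fin n)) : ℕ :=
  (Finset.univ.filter fun m : ι => (s m ∈ X ∧ t m ∉ X) ∨ (s m ∉ X ∧ t m ∈ X)).card

theorem cutCondition_iff (u : Sym2 (Fin n) → ℕ) :
    CutCondition G u s t ↔ ∀ X, sepCount s t X ≤ cutWeight G u X :=
  Iff.rfl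

theorem sepCount_compl (X : Set (Fin n)) : sepCount s t Xᶜ = sepCount s t X := by
  simp only [sepCount, Set.mem_compl_iff, not_not]
  congr 1
  ext m
  simp only [mem_filter]
  tauto

theorem sepCount_union_le (X₁ X₂ : Set (Fin n)) :
    sepCount s t (X₁ ∪ X₂) ≤ sepCount s t X₁ + sepCount s t X₂ := by
  refine (card_le_card fun m => ?_).trans (card_union_le _ _)
  simp only [mem_filter, mem_univ, true_and, mem_union, Set.mem_union]
  tauto

theorem sepCount_eq_zero {X : Set (Fin n)} (h : ∀ m, s m ∈ X ↔ t m ∈ X) : sepCount s t X = 0 :=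
  card_eq_zero.2 <| filter_eq_empty_iff.2 fun m _ => by have := h m; tauto

theorem sepCount_eq_add_sepCount_subtype_ne [DecidableEq ι] (X : Set (Fin n)) (a : ι) :
    sepCount s t X = (if (s a ∈ X ∧ t a ∉ X) ∨ (s a ∉ X ∧ t a ∈ X) then 1 else 0) +
      sepCount (fun m : {m // m ≠ a} => s m) (fun m => t m) X := by
  simp only [sepCount, card_filter]
  exact Fintype.sum_eq_add_sum_subtype_ne _ a

end SepCount

theorem cutCondition_of_isCentralCut {ι : Type} [Fintype ι] (hG : G.Preconnected)
    (u : Sym2 (Fin n) → ℕ) (s t : ι → Fin n)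
    (h : ∀ X, IsCentralCut G X → sepCount s t X ≤ cutWeight G u X) :
    CutCondition G u s t := by
  rw [cutCondition_iff]
  intro X
  induction hX : #(cutEdges G X) using Nat.strong_induction_on generalizing X with
  | _ m ih =>
    have of_split : ∀ Y, #(cutEdges G Y) = m → (∃ a ∈ Y, ∃ b ∈ Y, ¬ReachableWithin G Y a b) →
        sepCount s t Y ≤ cutWeight G u Y := by
      rintro Y rfl ⟨a, ha, b, hb, hab⟩
      obtain ⟨X₁, X₂, rfl, hd, hadj, h₁, h₂⟩ := exists_split_of_not_reachableWithin ha hb hab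
      have hlt₁ := card_cutEdges_lt_union hG hd hadj h₁ h₂
      have hlt₂ := card_cutEdges_lt_union hG hd.symm (fun w hw v hv hwv => hadj v hv w hw hwv.symm)
        h₂ h₁
      rw [Set.union_comm X₂] at hlt₂
      calc sepCount s t (X₁ ∪ X₂) ≤ sepCount s t X₁ + sepCount s t X₂ := sepCount_union_le s t _ _
        _ ≤ cutWeight G u X₁ + cutWeight G u X₂ := add_le_add (ih _ hlt₁ X₁ rfl) (ih _ hlt₂ X₂ rfl)
        _ = cutWeight G u (X₁ ∪ X₂) := (cutWeight_union u hd hadj).symm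
    by_cases hc : IsCentralCut G X
    · exact h X hc
    rcases not_and_or.1 hc with hc | hc
    · push Not at hc
      exact of_split X hX hc
    · push Not at hc
      rw [← sepCount_compl, ← cutWeight_compl]
      exact of_split Xᶜ (by rw [cutEdges_compl, hX]) hc

theorem Nat.exists_not_iff_succ (P : ℕ → Prop) {p q : ℕ} (hpq : p ≤ q) (h : ¬(P p ↔ P q)) :
    ∃ f, p ≤ f ∧ f < q ∧ ¬(P f ↔ P (f + 1)) := by
  induction q, hpq using Nat.le_induction with
  | base => exact absurd Iff.rfl h
  | succ q hpq ih =>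
    by_cases hq : P p ↔ P q
    · exact ⟨q, hpq, q.lt_succ_self, fun h' => h (hq.trans h')⟩
    · obtain ⟨f, hpf, hfq, hf⟩ := ih hq
      exact ⟨f, hpf, hfq.trans q.lt_succ_self, hf⟩

section Circle

variable [NeZero n]

open Fin.NatCast in
theorem preconnected_of_adj_add_one (h : ∀ l : Fin n, G.Adj l (l + 1)) : G.Preconnected := by
  have reach : ∀ m : ℕ, G.Reachable 0 (m : Fin n) := by
    intro m
    induction m with
    | zero => exact .refl _
    | succ m ih => exact Nat.cast_succ (R := Fin n) m ▸ ih.trans (h _).reachable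
  intro v w
  simpa only [Fin.cast_val_eq_self] using (reach v).symm.trans (reach w)

open Fin.NatCast in
theorem exists_not_iff_add_one (X : Set (Fin n)) {p q : Fin n} (hpq : p ≤ q)
    (h : ¬(p ∈ X ↔ q ∈ X)) : ∃ f, p ≤ f ∧ f < q ∧ ¬(f ∈ X ↔ f + 1 ∈ X) := by
  obtain ⟨f, hpf, hfq, hf⟩ := Nat.exists_not_iff_succ (fun m => (m : Fin n) ∈ X) hpq
    (by simpa only [Fin.cast_val_eq_self] using h)
  have hfn : f < n := hfq.trans q.isLt
  refine ⟨f, ?_, ?_, by simpa only [Nat.cast_succ] using hf⟩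
  · simpa [Fin.le_def, Nat.mod_eq_of_lt hfn] using hpf
  · simpa [Fin.lt_def, Nat.mod_eq_of_lt hfn] using hfq

theorem IsCentralCut.mem_iff_of_two_flips (hnc : NonCrossing n G.edgeSet) {X : Set (Fin n)}
    (hX : IsCentralCut G X) {l₁ l₂ v : Fin n} (h₁₂ : l₁ < l₂) (hl₂ : (l₂ : ℕ) + 1 < n)
    (hf₁ : ¬(l₁ ∈ X ↔ l₁ + 1 ∈ X)) (hf₂ : ¬(l₂ ∈ X ↔ l₂ + 1 ∈ X)) (hv : v ≤ l₁ ∨ l₂ + 1 ≤ v) :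
    v ∈ X ↔ l₁ ∈ X := by
  have h₁₂' : (l₁ : ℕ) < l₂ := h₁₂
  have hs₁ := Fin.val_add_one_of_lt' (i := l₁) (by omega)
  have hs₂ := Fin.val_add_one_of_lt' hl₂
  have hl₁ : l₁ < l₁ + 1 := by rw [Fin.lt_def, hs₁]; omega
  have hl₂' : l₂ < l₂ + 1 := by rw [Fin.lt_def, hs₂]; omega
  have hmid : l₁ + 1 ∈ X ↔ l₂ ∈ X := by
    rcases (show l₁ + 1 ≤ l₂ by rw [Fin.le_def, hs₁]; omega).lt_or_eq with hlt | heq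
    · have := hX.not_alternating hnc hl₁ hlt hl₂'
      tauto
    · rw [heq]
  have hl₁₂ : l₁ + 1 < l₂ + 1 := by rw [Fin.lt_def, hs₁, hs₂]; omega
  rcases hv with hv | hv
  · rcases hv.lt_or_eq with hv | rfl
    · have := hX.not_alternating hnc hv hl₁ hl₁₂
      tauto
    · rfl
  · rcases hv.lt_or_eq with hv | rfl
    · have := hX.not_alternating hnc hl₁ hl₁₂ hv
      tauto
    · tauto

theorem IsCentralCut.sepCount_eq_zero_of_two_flips (hnc : NonCrossing n G.edgeSet)
    {X : Set (Fin n)} (hX : IsCentralCut G X) {ι : Type} [Fintype ι] (sdem tdem : ι → Fin n)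
    {i j l₁ l₂ : Fin n} (hil₁ : i ≤ l₁) (h₁₂ : l₁ < l₂) (hl₂j : l₂ < j)
    (hf₁ : ¬(l₁ ∈ X ↔ l₁ + 1 ∈ X)) (hf₂ : ¬(l₂ ∈ X ↔ l₂ + 1 ∈ X))
    (hterm : ∀ l : Fin n, i < l → l < j → ∀ m : ι, sdem m ≠ l ∧ tdem m ≠ l) :
    sepCount sdem tdem X = 0 := by
  have hl₂ : (l₂ : ℕ) + 1 < n := by
    have : (l₂ : ℕ) < j := hl₂j
    omega
  have outside : ∀ v : Fin n, (∀ l, i < l → l < j → v ≠ l) → (v ∈ X ↔ l₁ ∈ X) := by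
    intro v hv
    refine hX.mem_iff_of_two_flips hnc h₁₂ hl₂ hf₁ hf₂ ?_
    by_cases hvi : v ≤ i
    · exact .inl (hvi.trans hil₁)
    · have hjv : j ≤ v := not_lt.1 fun hvj => hv v (not_le.1 hvi) hvj rfl
      have : (l₂ : ℕ) < j := hl₂j
      have : (j : ℕ) ≤ v := hjv
      exact .inr (by rw [Fin.le_def, Fin.val_add_one_of_lt' hl₂]; omega)
  exact sepCount_eq_zero _ _ fun m =>
    (outside _ fun l hil hlj => (hterm l hil hlj m).1).trans
      (outside _ fun l hil hlj => (hterm l hil hlj m).2).symm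

theorem not_iff_of_unique_flip {X : Set (Fin n)} {i j l₀ : Fin n} (hil₀ : i ≤ l₀)
    (hl₀j : l₀ < j) (hf₀ : ¬(l₀ ∈ X ↔ l₀ + 1 ∈ X))
    (huniq : ∀ l, i ≤ l → l < j → ¬(l ∈ X ↔ l + 1 ∈ X) → l = l₀) : ¬(i ∈ X ↔ j ∈ X) := by
  intro hij
  have : (l₀ : ℕ) < j := hl₀j
  have hs := Fin.val_add_one_of_lt' (i := l₀) (by omega)
  by_cases hi : i ∈ X ↔ l₀ ∈ X
  · obtain ⟨f, hf₁, hfj, hf⟩ :=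
      exists_not_iff_add_one X (p := l₀ + 1) (q := j) (by rw [Fin.le_def, hs]; omega) (by tauto)
    have : (l₀ : ℕ) + 1 ≤ f := by rw [← hs]; exact hf₁
    have := huniq f (hil₀.trans (Fin.le_def.2 (by omega))) hfj hf
    omega
  · obtain ⟨f, hif, hfl₀, hf⟩ := exists_not_iff_add_one X hil₀ hi
    exact hfl₀.ne (huniq f hif (hfl₀.trans hl₀j) hf)

theorem exists_flip_of_mem_filter_cutEdges {X : Set (Fin n)} {i j : Fin n} {e : Sym2 (Fin n)}
    (he : e ∈ (cutEdges G X).filter fun e => ∃ l, i ≤ l ∧ l < j ∧ e = s(l, l + 1)) :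
    ∃ l, i ≤ l ∧ l < j ∧ ¬(l ∈ X ↔ l + 1 ∈ X) ∧ e = s(l, l + 1) := by
  obtain ⟨he, l, hil, hlj, rfl⟩ := mem_filter.1 he
  exact ⟨l, hil, hlj, (mk_mem_cutEdges.1 he).2, rfl⟩

theorem IsCentralCut.sepCount_subtype_ne_le (hnc : NonCrossing n G.edgeSet) {X : Set (Fin n)}
    (hX : IsCentralCut G X) {ι : Type} [Fintype ι] [DecidableEq ι] (u : Sym2 (Fin n) → ℕ)
    (sdem tdem : ι → Fin n) (a : ι) {i j : Fin n} (hdem : s(sdem a, tdem a) = s(i, j))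
    (hterm : ∀ l : Fin n, i < l → l < j → ∀ m : ι, sdem m ≠ l ∧ tdem m ≠ l)
    (hcut : sepCount sdem tdem X ≤ cutWeight G u X) :
    sepCount (fun m : {m // m ≠ a} => sdem m) (fun m => tdem m) X ≤
      cutWeight G
        (fun e => if ∃ l : Fin n, i ≤ l ∧ l < j ∧ e = s(l, l + 1) then u e - 1 else u e) X := by
  have hcap := cutWeight_le_cutWeight_sub_add (G := G) u
    (fun e => ∃ l : Fin n, i ≤ l ∧ l < j ∧ e = s(l, l + 1)) X
  have hsep := sepCount_eq_add_sepCount_subtype_ne sdem tdem X a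
  set pathCut := (cutEdges G X).filter fun e => ∃ l, i ≤ l ∧ l < j ∧ e = s(l, l + 1)
  by_cases hflip : ∃ l, i ≤ l ∧ l < j ∧ ¬(l ∈ X ↔ l + 1 ∈ X)
  swap
  · have hnone : #pathCut = 0 := card_eq_zero.2 <| eq_empty_of_forall_notMem fun e he => by
      obtain ⟨l, hil, hlj, hl, -⟩ := exists_flip_of_mem_filter_cutEdges he
      exact hflip ⟨l, hil, hlj, hl⟩
    omega
  obtain ⟨l₀, hil₀, hl₀j, hf₀⟩ := hflip
  by_cases hflip' : ∃ l, i ≤ l ∧ l < j ∧ ¬(l ∈ X ↔ l + 1 ∈ X) ∧ l ≠ l₀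
  · obtain ⟨l₁, hil₁, hl₁j, hf₁, hne⟩ := hflip'
    have hterm' : ∀ l : Fin n, i < l → l < j → ∀ m : {m // m ≠ a}, sdem m ≠ l ∧ tdem m ≠ l :=
      fun l hil hlj m => hterm l hil hlj m
    rcases hne.lt_or_gt with h | h
    · exact (hX.sepCount_eq_zero_of_two_flips hnc _ _ hil₁ h hl₀j hf₁ hf₀ hterm').trans_le
        (Nat.zero_le _)
    · exact (hX.sepCount_eq_zero_of_two_flips hnc _ _ hil₀ h hl₁j hf₀ hf₁ hterm').trans_le
        (Nat.zero_le _)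
  have huniq : ∀ l, i ≤ l → l < j → ¬(l ∈ X ↔ l + 1 ∈ X) → l = l₀ :=
    fun l hil hlj hl => by_contra fun hne => hflip' ⟨l, hil, hlj, hl, hne⟩
  have hsepij := not_iff_of_unique_flip hil₀ hl₀j hf₀ huniq
  have hone : #pathCut ≤ 1 :=
    card_le_one.2 fun e he e' he' => by
      obtain ⟨l, hil, hlj, hl, rfl⟩ := exists_flip_of_mem_filter_cutEdges he
      obtain ⟨l', hil', hlj', hl', rfl⟩ := exists_flip_of_mem_filter_cutEdges he'
      rw [huniq l hil hlj hl, huniq l' hil' hlj' hl']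
  have ha : (sdem a ∈ X ∧ tdem a ∉ X) ∨ (sdem a ∉ X ∧ tdem a ∈ X) := by
    rcases Sym2.eq_iff.1 hdem with ⟨hi, hj⟩ | ⟨hi, hj⟩ <;> rw [hi, hj] <;> tauto
  rw [if_pos ha] at hsep
  omega

end Circle

theorem stmt6_general (n : ℕ) [NeZero n] (k : ℕ) (G : SimpleGraph (Fin n))
    (houter : ∀ l : Fin n, G.Adj l (l + 1))
    (u : Sym2 (Fin n) → ℕ)
    (sdem tdem : Fin k → Fin n)
    (hnc : NonCrossing n
      (G.edgeSet ∪ {e : Sym2 (Fin n) | ∃ m : Fin k, e = s(sdem m, tdem m)}))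
    (hcut : CutCondition G u sdem tdem)
    (m0 : Fin k) (i j : Fin n)
    (hdem : s(sdem m0, tdem m0) = s(i, j))
    (hnoterm : ∀ l : Fin n, i < l → l < j → ∀ m : Fin k, sdem m ≠ l ∧ tdem m ≠ l) :
    CutCondition G
      (fun e => if ∃ l : Fin n, i ≤ l ∧ l < j ∧ e = s(l, l + 1) then u e - 1 else u e)
      (fun m : {m : Fin k // m ≠ m0} => sdem m.1)
      (fun m : {m : Fin k // m ≠ m0} => tdem m.1) :=
  cutCondition_of_isCentralCut (preconnected_of_adj_add_one houter) _ _ _ fun X hX =>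
    hX.sepCount_subtype_ne_le (hnc.mono Set.subset_union_left) u sdem tdem m0 hdem hnoterm
      (hcut X)

theorem stmt6 (n : ℕ) [NeZero n] (hn : 2 ≤ n) (k : ℕ) (G : SimpleGraph (Fin n))
    (houter : ∀ l : Fin n, G.Adj l (l + 1))
    (u : Sym2 (Fin n) → ℕ) (hu : ∀ e ∈ G.edgeSet, 0 < u e)
    (sdem tdem : Fin k → Fin n)
    (hnc : NonCrossing n
      (G.edgeSet ∪ {e : Sym2 (Fin n) | ∃ m : Fin k, e = s(sdem m, tdem m)}))
    (hcut : CutCondition G u sdem tdem)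
    (m0 : Fin k) (i j : Fin n) (hij : i < j)
    (hdem : s(sdem m0, tdem m0) = s(i, j))
    (hnoterm : ∀ l : Fin n, i < l → l < j → ∀ m : Fin k, sdem m ≠ l ∧ tdem m ≠ l) :
    CutCondition G
      (fun e => if ∃ l : Fin n, i ≤ l ∧ l < j ∧ e = s(l, l + 1) then u e - 1 else u e)
      (fun m : {m : Fin k // m ≠ m0} => sdem m.1)
      (fun m : {m : Fin k // m ≠ m0} => tdem m.1) :=
  stmt6_general n k G houter u sdem tdem hnc hcut m0 i j hdem hnoterm
end

section
/- Let G be a finite simple graph whose vertex set is V = A ∪ B with A ∩ B = {v} and such that every edge of G has both endpoints in A or both endpoints in B; let u assign a positive integer capacity to each edge. Let (s_1,t_1), ..., (s_k,t_k) be demand pairs on V. Form a demand list H_A on the induced subgraph G[A] by taking, for each i, the pair obtained from (s_i,t_i) by replacing any endpoint lying in B∖{v} by v, and discarding the result if the two endpoints become equal; define H_B symmetrically. Then: (a) if the cut condition holds for G, u and the demands (for every X ⊆ V, the number of demands with exactly one endpoint in X is at most u(δ_G(X))), then the cut condition holds for G[A], u, H_A and for G[B], u, H_B; and (b) if H_A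 is routable in G[A] with capacities u and H_B is routable in G[B] with capacities u, then the original demands are routable in G with capacities u. -/
open SimpleGraph
open scoped Classical

/-- The total `u`-capacity of the cut induced by `X` in the subgraph of `G` induced on `A`:
the sum of `u e` over the edges `e` of `G` with both endpoints in `A` and with exactly one
endpoint in `X`.  Taking `A = Set.univ` gives the usual cut `δ_G(X)`. -/
noncomputable def cutWeightIn {V : Type*} [Fintype V] (G : SimpleGraph V)
    (u : Sym2 V → ℕ) (A X : Set V) : ℕ :=
  ∑ e ∈ Finset.univ.filter
      (fun e : Sym2 V =>
        e ∈ G.edgeSet ∧ (∀ x ∈ e, x ∈ A) ∧ ∃ a b : V, e = s(a, b) ∧ a ∈ X ∧ b ∉ X),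
    u e

/-- The cut condition for the demands `(sdem i, tdem i)` in the subgraph of `G` induced
on `A`: for every `X ⊆ A`, the number of demands separated by `X` is at most the capacity
of the cut of `G[A]` induced by `X`. -/
def CutConditionIn {V : Type*} [Fintype V] (G : SimpleGraph V) (u : Sym2 V → ℕ)
    (A : Set V) {ι : Type*} [Fintype ι] (sdem tdem : ι → V) : Prop :=
  ∀ X : Set V, X ⊆ A →
    (Finset.univ.filter
        (fun i : ι => (sdem i ∈ X ∧ tdem i ∉ X) ∨ (sdem i ∉ X ∧ tdem i ∈ X))).card
      ≤ cutWeightIn G u A X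

/-- The demands `(sdem i, tdem i)` are routable in the subgraph of `G` induced on `A`,
with capacities `u`: there are paths of `G` all of whose vertices lie in `A`, one joining
`sdem i` to `tdem i` for each `i`, such that every edge `e` lies on at most `u e` of the
paths.  Taking `A = Set.univ` gives routability in `G` itself. -/
def RoutableIn {V : Type*} [Fintype V] (G : SimpleGraph V) (u : Sym2 V → ℕ)
    (A : Set V) {ι : Type*} [Fintype ι] (sdem tdem : ι → V) : Prop :=
  ∃ P : (i : ι) → G.Walk (sdem i) (tdem i),
    (∀ i, (P i).IsPath) ∧
    (∀ i, ∀ x ∈ (P i).support, x ∈ A) ∧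
    ∀ e : Sym2 V,
      (Finset.univ.filter (fun i : ι => e ∈ (P i).edges)).card ≤ u e

/-- Replace any vertex outside `A` by the cut vertex `v`. -/
noncomputable def projTo {V : Type*} (A : Set V) (v : V) : V → V :=
  fun x => if x ∈ A then x else v

/-
Edges of `G` lie entirely on one side, so a set `X ⊆ A` and its preimage under the projection
`projTo A v` (which moves `B ∖ {v}` onto `v`) cut the same edges, while a demand separated by `X`
after projection is separated by that preimage before it; this gives (a). For (b), a demand
that stays on one side is routed by its projection there, and a demand crossing from one side
to the other is routed by concatenating its two projections at `v`. A single edge of `G` can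
then only be used by the routing of the side containing it, since an edge inside `A ∩ B = {v}`
would be a loop.
-/

section CutVertex

variable {V : Type*} {A B : Set V} {v x : V}

lemma projTo_of_mem (hx : x ∈ A) : projTo A v x = x :=
  if_pos hx

lemma projTo_of_notMem (hx : x ∉ A) : projTo A v x = v :=
  if_neg hx

lemma eq_of_mem_inter_eq_singleton (hinter : A ∩ B = {v}) (hA : x ∈ A) (hB : x ∈ B) :
    x = v := by
  have hx : x ∈ A ∩ B := ⟨hA, hB⟩
  rwa [hinter] at hx

lemma mem_left_of_inter_eq_singleton (hinter : A ∩ B = {v}) : v ∈ A := by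
  have hv : v ∈ A ∩ B := by rw [hinter]; rfl
  exact hv.1

lemma projTo_of_mem_right (hinter : A ∩ B = {v}) (hx : x ∈ B) : projTo A v x = v := by
  by_cases hxA : x ∈ A
  · rw [projTo_of_mem hxA, eq_of_mem_inter_eq_singleton hinter hxA hx]
  · exact projTo_of_notMem hxA

lemma projTo_mem (hv : v ∈ A) (x : V) : projTo A v x ∈ A := by
  by_cases hx : x ∈ A
  · rwa [projTo_of_mem hx]
  · rwa [projTo_of_notMem hx]

lemma not_forall_mem_inter_of_mem_edgeSet {G : SimpleGraph V} {e : Sym2 V}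
    (hinter : A ∩ B = {v}) (he : e ∈ G.edgeSet) :
    ¬ ((∀ x ∈ e, x ∈ A) ∧ (∀ x ∈ e, x ∈ B)) := by
  rintro ⟨heA, heB⟩
  induction e using Sym2.ind with
  | _ a b =>
    have hv : ∀ x ∈ s(a, b), x = v := fun x hx =>
      eq_of_mem_inter_eq_singleton hinter (heA x hx) (heB x hx)
    apply G.not_isDiag_of_mem_edgeSet he
    rw [Sym2.mk_isDiag_iff, hv a (Sym2.mem_mk_left a b), hv b (Sym2.mem_mk_right a b)]

end CutVertex

section CutCondition

variable {V : Type*} [Fintype V] {G : SimpleGraph V} {u : Sym2 V → ℕ} {A B : Set V} {v : V}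

lemma cutWeightIn_univ_preimage_projTo (hinter : A ∩ B = {v})
    (hedges : ∀ e ∈ G.edgeSet, (∀ x ∈ e, x ∈ A) ∨ (∀ x ∈ e, x ∈ B)) (X : Set V) :
    cutWeightIn G u Set.univ (projTo A v ⁻¹' X) = cutWeightIn G u A X := by
  unfold cutWeightIn
  congr 1
  ext e
  simp only [Finset.mem_filter, Finset.mem_univ, Set.mem_univ, implies_true, true_and,
    Set.mem_preimage]
  refine and_congr_right fun he => ?_
  rcases hedges e he with heA | heB
  · rw [and_iff_right heA]
    constructor
    · rintro ⟨a, b, rfl, ha, hb⟩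
      rw [projTo_of_mem (heA a (Sym2.mem_mk_left a b))] at ha
      rw [projTo_of_mem (heA b (Sym2.mem_mk_right a b))] at hb
      exact ⟨a, b, rfl, ha, hb⟩
    · rintro ⟨a, b, rfl, ha, hb⟩
      refine ⟨a, b, rfl, ?_, ?_⟩
      · rwa [projTo_of_mem (heA a (Sym2.mem_mk_left a b))]
      · rwa [projTo_of_mem (heA b (Sym2.mem_mk_right a b))]
  · -- both endpoints project to `v`, so the edge crosses neither cut
    refine iff_of_false ?_ fun h => not_forall_mem_inter_of_mem_edgeSet hinter he ⟨h.1, heB⟩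
    rintro ⟨a, b, rfl, ha, hb⟩
    rw [projTo_of_mem_right hinter (heB a (Sym2.mem_mk_left a b))] at ha
    rw [projTo_of_mem_right hinter (heB b (Sym2.mem_mk_right a b))] at hb
    exact hb ha

theorem CutConditionIn.restrict_projTo {ι : Type*} [Fintype ι] {sdem tdem : ι → V}
    (hinter : A ∩ B = {v})
    (hedges : ∀ e ∈ G.edgeSet, (∀ x ∈ e, x ∈ A) ∨ (∀ x ∈ e, x ∈ B))
    (hcc : CutConditionIn G u Set.univ sdem tdem) :
    CutConditionIn G u A
      (fun i : {i : ι // projTo A v (sdem i) ≠ projTo A v (tdem i)} => projTo A v (sdem i.1))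
      (fun i : {i : ι // projTo A v (sdem i) ≠ projTo A v (tdem i)} =>
        projTo A v (tdem i.1)) := by
  intro X _
  calc _ ≤ (Finset.univ.filter fun i : ι =>
          (sdem i ∈ projTo A v ⁻¹' X ∧ tdem i ∉ projTo A v ⁻¹' X) ∨
            (sdem i ∉ projTo A v ⁻¹' X ∧ tdem i ∈ projTo A v ⁻¹' X)).card :=
        Finset.card_le_card_of_injOn Subtype.val (fun i hi => by simpa using hi)
          Subtype.val_injective.injOn
    _ ≤ cutWeightIn G u Set.univ (projTo A v ⁻¹' X) := hcc _ (Set.subset_univ _)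
    _ = cutWeightIn G u A X := cutWeightIn_univ_preimage_projTo hinter hedges X

end CutCondition

section Routing

variable {V : Type*} {G : SimpleGraph V} {A B : Set V} {v : V}

lemma SimpleGraph.Walk.isPath_append_of_inter_eq_singleton (hinter : A ∩ B = {v}) {s t : V}
    {p : G.Walk s v} {q : G.Walk v t} (hp : p.IsPath) (hq : q.IsPath)
    (hpA : ∀ x ∈ p.support, x ∈ A) (hqB : ∀ x ∈ q.support, x ∈ B) :
    (p.append q).IsPath := by
  rw [Walk.isPath_def, Walk.support_append]
  have hq' := hq.support_nodup
  rw [← q.cons_tail_support] at hq'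
  refine hp.support_nodup.append (List.nodup_cons.mp hq').2 fun x hxp hxq => ?_
  have hxv : x = v :=
    eq_of_mem_inter_eq_singleton hinter (hpA x hxp) (hqB x (List.mem_of_mem_tail hxq))
  exact (List.nodup_cons.mp hq').1 (hxv ▸ hxq)

lemma SimpleGraph.Walk.notMem_edges_of_forall_mem_inter (hinter : A ∩ B = {v})
    {e : Sym2 V} (he : e ∈ G.edgeSet) (heA : ∀ x ∈ e, x ∈ A) {a b : V} {q : G.Walk a b}
    (hqB : ∀ x ∈ q.support, x ∈ B) : e ∉ q.edges := fun heq =>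
  not_forall_mem_inter_of_mem_edgeSet hinter he
    ⟨heA, fun _ hx => hqB _ (Walk.mem_support_of_mem_edges heq hx)⟩

lemma exists_isPath_of_projTo (hcover : A ∪ B = Set.univ) (hinter : A ∩ B = {v}) {s t : V}
    {p : G.Walk (projTo A v s) (projTo A v t)} {q : G.Walk (projTo B v s) (projTo B v t)}
    (hp : p.IsPath) (hq : q.IsPath)
    (hpA : ∀ x ∈ p.support, x ∈ A) (hqB : ∀ x ∈ q.support, x ∈ B) :
    ∃ w : G.Walk s t, w.IsPath ∧ ∀ e ∈ w.edges, e ∈ p.edges ∨ e ∈ q.edges := by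
  have hinter' : B ∩ A = {v} := by rwa [Set.inter_comm]
  have hB : ∀ x, x ∉ A → x ∈ B := fun x hx =>
    ((Set.eq_univ_iff_forall.mp hcover) x).resolve_left hx
  by_cases hsA : s ∈ A <;> by_cases htA : t ∈ A
  · refine ⟨p.copy (projTo_of_mem hsA) (projTo_of_mem htA), by simpa using hp, ?_⟩
    simp +contextual
  · let p' := p.copy (projTo_of_mem hsA) (projTo_of_notMem htA)
    let q' := q.copy (projTo_of_mem_right hinter' hsA) (projTo_of_mem (hB t htA))
    refine ⟨p'.append q', ?_, ?_⟩
    · exact Walk.isPath_append_of_inter_eq_singleton hinter (by simpa [p'] using hp)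
        (by simpa [q'] using hq) (by simpa [p'] using hpA) (by simpa [q'] using hqB)
    · simp [p', q']
  · let q' := q.copy (projTo_of_mem (hB s hsA)) (projTo_of_mem_right hinter' htA)
    let p' := p.copy (projTo_of_notMem hsA) (projTo_of_mem htA)
    refine ⟨q'.append p', ?_, ?_⟩
    · exact Walk.isPath_append_of_inter_eq_singleton hinter' (by simpa [q'] using hq)
        (by simpa [p'] using hp) (by simpa [q'] using hqB) (by simpa [p'] using hpA)
    · simp +contextual [p', q', or_comm]
  · refine ⟨q.copy (projTo_of_mem (hB s hsA)) (projTo_of_mem (hB t htA)),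
      by simpa using hq, ?_⟩
    simp +contextual

variable [Fintype V] {u : Sym2 V → ℕ}

theorem RoutableIn.of_subtype_ne {ι : Type*} [Fintype ι] {sdem tdem : ι → V}
    (hmem : ∀ i, sdem i ∈ A)
    (h : RoutableIn G u A (fun i : {i : ι // sdem i ≠ tdem i} => sdem i.1)
      (fun i : {i : ι // sdem i ≠ tdem i} => tdem i.1)) :
    RoutableIn G u A sdem tdem := by
  obtain ⟨P, hpath, hsupp, hcap⟩ := h
  let Q : (i : ι) → G.Walk (sdem i) (tdem i) := fun i =>
    if hi : sdem i = tdem i then Walk.nil.copy rfl hi else P ⟨i, hi⟩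
  refine ⟨Q, fun i => ?_, fun i => ?_, fun e => ?_⟩
  · by_cases hi : sdem i = tdem i
    · simp [Q, hi]
    · simpa [Q, hi] using hpath ⟨i, hi⟩
  · by_cases hi : sdem i = tdem i
    · simpa [Q, hi] using hmem i
    · simpa [Q, hi] using hsupp ⟨i, hi⟩
  · refine (Finset.card_le_card ?_).trans
      ((Finset.card_map (Function.Embedding.subtype _)).trans_le (hcap e))
    intro i hi
    by_cases hst : sdem i = tdem i
    · simp [Q, hst] at hi
    · simp only [Finset.mem_filter, Finset.mem_univ, true_and, Q, dif_neg hst] at hi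
      exact Finset.mem_map.mpr ⟨⟨i, hst⟩, by simpa using hi, rfl⟩

lemma routableIn_univ_of_projTo (hcover : A ∪ B = Set.univ) (hinter : A ∩ B = {v})
    (hedges : ∀ e ∈ G.edgeSet, (∀ x ∈ e, x ∈ A) ∨ (∀ x ∈ e, x ∈ B))
    {ι : Type*} [Fintype ι] {sdem tdem : ι → V}
    (hA : RoutableIn G u A (fun i => projTo A v (sdem i)) (fun i => projTo A v (tdem i)))
    (hB : RoutableIn G u B (fun i => projTo B v (sdem i)) (fun i => projTo B v (tdem i))) :
    RoutableIn G u Set.univ sdem tdem := by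
  obtain ⟨P, hPpath, hPA, hPcap⟩ := hA
  obtain ⟨Q, hQpath, hQB, hQcap⟩ := hB
  choose W hWpath hWedges using fun i =>
    exists_isPath_of_projTo hcover hinter (hPpath i) (hQpath i) (hPA i) (hQB i)
  refine ⟨W, hWpath, fun _ _ _ => trivial, fun e => ?_⟩
  by_cases he : e ∈ G.edgeSet
  · rcases hedges e he with heA | heB
    · refine (Finset.card_le_card
        (Finset.monotone_filter_right _ fun i _ hi => ?_)).trans (hPcap e)
      exact (hWedges i e hi).resolve_right
        (Walk.notMem_edges_of_forall_mem_inter hinter he heA (hQB i))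
    · have hinter' : B ∩ A = {v} := by rwa [Set.inter_comm]
      refine (Finset.card_le_card
        (Finset.monotone_filter_right _ fun i _ hi => ?_)).trans (hQcap e)
      exact (hWedges i e hi).resolve_left
        (Walk.notMem_edges_of_forall_mem_inter hinter' he heB (hPA i))
  · rw [Finset.filter_false_of_mem fun i _ hi => he ((W i).edges_subset_edgeSet hi)]
    exact Nat.zero_le _

end Routing

theorem stmt9_general {V : Type*} [Fintype V] (G : SimpleGraph V)
    (u : Sym2 V → ℕ)
    (A B : Set V) (v : V) (hcover : A ∪ B = Set.univ) (hinter : A ∩ B = {v})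
    (hedges : ∀ e ∈ G.edgeSet, (∀ x ∈ e, x ∈ A) ∨ (∀ x ∈ e, x ∈ B))
    (k : ℕ) (sdem tdem : Fin k → V) :
    -- (a) the cut condition is inherited by the two sides
    ((CutConditionIn G u Set.univ sdem tdem →
      (CutConditionIn G u A
        (fun i : {i : Fin k // projTo A v (sdem i) ≠ projTo A v (tdem i)} =>
          projTo A v (sdem i.1))
        (fun i : {i : Fin k // projTo A v (sdem i) ≠ projTo A v (tdem i)} =>
          projTo A v (tdem i.1)) ∧
       CutConditionIn G u B
        (fun i : {i : Fin k // projTo B v (sdem i) ≠ projTo B v (tdem i)} =>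
          projTo B v (sdem i.1))
        (fun i : {i : Fin k // projTo B v (sdem i) ≠ projTo B v (tdem i)} =>
          projTo B v (tdem i.1))))) ∧
    -- (b) routability on the two sides yields routability of the original demands
    ((RoutableIn G u A
        (fun i : {i : Fin k // projTo A v (sdem i) ≠ projTo A v (tdem i)} =>
          projTo A v (sdem i.1))
        (fun i : {i : Fin k // projTo A v (sdem i) ≠ projTo A v (tdem i)} =>
          projTo A v (tdem i.1)) →
      RoutableIn G u B
        (fun i : {i : Fin k // projTo B v (sdem i) ≠ projTo B v (tdem i)} =>
          projTo B v (sdem i.1))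
        (fun i : {i : Fin k // projTo B v (sdem i) ≠ projTo B v (tdem i)} =>
          projTo B v (tdem i.1)) →
      RoutableIn G u Set.univ sdem tdem)) := by
  have hinter' : B ∩ A = {v} := by rwa [Set.inter_comm]
  have hedges' : ∀ e ∈ G.edgeSet, (∀ x ∈ e, x ∈ B) ∨ (∀ x ∈ e, x ∈ A) :=
    fun e he => (hedges e he).symm
  exact ⟨fun hcc => ⟨hcc.restrict_projTo hinter hedges, hcc.restrict_projTo hinter' hedges'⟩,
    fun hA hB => routableIn_univ_of_projTo hcover hinter hedges
      (hA.of_subtype_ne fun _ => projTo_mem (mem_left_of_inter_eq_singleton hinter) _)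
      (hB.of_subtype_ne fun _ => projTo_mem (mem_left_of_inter_eq_singleton hinter') _)⟩

theorem stmt9 {V : Type*} [Fintype V] (G : SimpleGraph V)
    (u : Sym2 V → ℕ) (hu : ∀ e ∈ G.edgeSet, 0 < u e)
    (A B : Set V) (v : V) (hcover : A ∪ B = Set.univ) (hinter : A ∩ B = {v})
    (hedges : ∀ e ∈ G.edgeSet, (∀ x ∈ e, x ∈ A) ∨ (∀ x ∈ e, x ∈ B))
    (k : ℕ) (sdem tdem : Fin k → V) :
    -- (a) the cut condition is inherited by the two sides
    ((CutConditionIn G u Set.univ sdem tdem →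
      (CutConditionIn G u A
        (fun i : {i : Fin k // projTo A v (sdem i) ≠ projTo A v (tdem i)} =>
          projTo A v (sdem i.1))
        (fun i : {i : Fin k // projTo A v (sdem i) ≠ projTo A v (tdem i)} =>
          projTo A v (tdem i.1)) ∧
       CutConditionIn G u B
        (fun i : {i : Fin k // projTo B v (sdem i) ≠ projTo B v (tdem i)} =>
          projTo B v (sdem i.1))
        (fun i : {i : Fin k // projTo B v (sdem i) ≠ projTo B v (tdem i)} =>
          projTo B v (tdem i.1))))) ∧
    -- (b) routability on the two sides yields routability of the original demands
    ((RoutableIn G u A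
        (fun i : {i : Fin k // projTo A v (sdem i) ≠ projTo A v (tdem i)} =>
          projTo A v (sdem i.1))
        (fun i : {i : Fin k // projTo A v (sdem i) ≠ projTo A v (tdem i)} =>
          projTo A v (tdem i.1)) →
      RoutableIn G u B
        (fun i : {i : Fin k // projTo B v (sdem i) ≠ projTo B v (tdem i)} =>
          projTo B v (sdem i.1))
        (fun i : {i : Fin k // projTo B v (sdem i) ≠ projTo B v (tdem i)} =>
          projTo B v (tdem i.1)) →
      RoutableIn G u Set.univ sdem tdem)) :=
  stmt9_general G u A B v hcover hinter hedges k sdem tdem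
end

section
/- For n ≥ 1, let G_n be the simple graph on the vertex set Z/(3·2^n)Z whose edge set is { {i·2^k, (i+1)·2^k} : 0 ≤ k ≤ n, 0 ≤ i < 3·2^{n−k} } (arithmetic modulo 3·2^n). There is a constant c > 0 such that for every n ≥ 1 and every spanning tree T of G_n, there exists an edge e of T whose fundamental cut X_e satisfies |δ_{G_n}(X_e)| ≥ c·n; equivalently, with unit capacities, the maximum over fundamental cuts X of T of the ratio |δ_{G_n}(X)| / |δ_T(X)| is Ω(log |V(G_n)|). -/
/-!
Let `e` be the first edge of the tree path from `0` to `2^n`. The shore of its fundamental cut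
containing `0` misses `2^n`. For each level `k ≤ n`, the level-`k` edges
`{j·2^k, (j+1)·2^k}`, `j < 2^(n-k)`, form a path from `0` to `2^n` in `G_n`, so one of them
crosses the cut. Edges of different levels differ (their endpoints differ by `2^k`), so the cut
has at least `n + 1` edges.
-/

open SimpleGraph

/-- The outerplanar graph `G_n` on `ℤ/(3·2^n)ℤ`: its edges are the pairs
`{i·2^k, (i+1)·2^k}` for `0 ≤ k ≤ n` and `0 ≤ i < 3·2^(n-k)` (arithmetic mod `3·2^n`). -/
def Gn (n : ℕ) : SimpleGraph (ZMod (3 * 2 ^ n)) :=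
  SimpleGraph.fromEdgeSet
    {e : Sym2 (ZMod (3 * 2 ^ n)) | ∃ k i : ℕ, k ≤ n ∧ i < 3 * 2 ^ (n - k) ∧
      e = s(((i * 2 ^ k : ℕ) : ZMod (3 * 2 ^ n)),
            (((i + 1) * 2 ^ k : ℕ) : ZMod (3 * 2 ^ n)))}

/-- The cut `δ_G(X)`: the set of edges of `G` with exactly one endpoint in `X`. -/
def cutEdgeSet {W : Type*} (G : SimpleGraph W) (X : Set W) : Set (Sym2 W) :=
  {e : Sym2 W | e ∈ G.edgeSet ∧ ∃ a b : W, e = s(a, b) ∧ a ∈ X ∧ b ∉ X}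

/-- The shore (containing `a`) of the fundamental cut of the edge `e` of the tree `T`:
the vertex set of the component of `T - e` containing `a`. -/
def fundCut {W : Type*} (T : SimpleGraph W) (a : W) (e : Sym2 W) : Set W :=
  {x : W | (T.deleteEdges {e}).Reachable a x}

lemma exists_lt_mem_and_succ_notMem {α : Type*} {f : ℕ → α} {X : Set α} :
    ∀ {m : ℕ}, f 0 ∈ X → f m ∉ X → ∃ j < m, f j ∈ X ∧ f (j + 1) ∉ X
  | 0, h0, hm => absurd h0 hm
  | m + 1, h0, hm => by
    by_cases hfm : f m ∈ X
    · exact ⟨m, m.lt_succ_self, hfm, hm⟩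
    · obtain ⟨j, hj, hfj, hfj'⟩ := exists_lt_mem_and_succ_notMem h0 hfm
      exact ⟨j, hj.trans m.lt_succ_self, hfj, hfj'⟩

lemma SimpleGraph.IsAcyclic.exists_adj_notMem_fundCut {W : Type*} {T : SimpleGraph W}
    (hT : T.IsAcyclic) {u v : W} (huv : T.Reachable u v) (hne : u ≠ v) :
    ∃ c, T.Adj u c ∧ v ∉ fundCut T u s(u, c) := by
  obtain ⟨p, hp⟩ := huv.exists_isPath
  obtain ⟨c, hadj, q, rfl⟩ := Walk.exists_eq_cons_of_ne hne p
  rw [Walk.cons_isPath_iff] at hp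
  refine ⟨c, hadj, fun huv' => isAcyclic_iff_forall_adj_isBridge.mp hT hadj ?_⟩
  -- `q` avoids `u`, hence also the edge `s(u, c)`, so it survives the deletion of that edge.
  have hcv : (T.deleteEdges {s(u, c)}).Reachable c v :=
    reachable_deleteEdges_iff_exists_walk.mpr
      ⟨q, fun he => hp.2 (q.fst_mem_support_of_mem_edges he)⟩
  exact huv'.trans hcv.symm

lemma Sym2.eq_or_add_eq_zero_of_mk_add_eq {A : Type*} [AddCommGroup A] {a b d d' : A}
    (h : s(a, a + d) = s(b, b + d')) : d = d' ∨ d + d' = 0 := by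
  rcases Sym2.eq_iff.mp h with ⟨rfl, h'⟩ | ⟨rfl, h'⟩
  · exact .inl (add_left_cancel h')
  · right
    have : b + d' + (d + d') = b + d' + 0 := by
      rw [add_zero, ← add_assoc, h']
    exact add_left_cancel this

lemma ZMod.natCast_ne_zero_of_pos_of_lt {N m : ℕ} (hm : 0 < m) (hmN : m < N) :
    (m : ZMod N) ≠ 0 := by
  rw [Ne, ZMod.natCast_eq_zero_iff]
  exact fun hdvd => (Nat.le_of_dvd hm hdvd).not_gt hmN

lemma Nat.two_pow_lt_three_mul_two_pow {n k : ℕ} (hk : k ≤ n) : 2 ^ k < 3 * 2 ^ n := by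
  have := Nat.pow_le_pow_right two_pos hk
  have := n.two_pow_pos
  omega

namespace Gn

def levelEdge (n k j : ℕ) : Sym2 (ZMod (3 * 2 ^ n)) :=
  s(((j * 2 ^ k : ℕ) : ZMod (3 * 2 ^ n)), (((j + 1) * 2 ^ k : ℕ) : ZMod (3 * 2 ^ n)))

variable {n k k' : ℕ}

lemma levelEdge_eq (j : ℕ) :
    levelEdge n k j = s(((j * 2 ^ k : ℕ) : ZMod (3 * 2 ^ n)),
      ((j * 2 ^ k : ℕ) : ZMod (3 * 2 ^ n)) + ((2 ^ k : ℕ) : ZMod (3 * 2 ^ n))) := by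
  rw [levelEdge, add_mul, one_mul, Nat.cast_add]

lemma levelEdge_mem_edgeSet (hk : k ≤ n) {j : ℕ} (hj : j < 3 * 2 ^ (n - k)) :
    levelEdge n k j ∈ (Gn n).edgeSet := by
  rw [Gn, edgeSet_fromEdgeSet]
  refine ⟨⟨k, j, hk, hj, rfl⟩, fun hdiag => ?_⟩
  rw [levelEdge_eq, Sym2.mem_diagSet, Sym2.mk_isDiag_iff, left_eq_add] at hdiag
  exact ZMod.natCast_ne_zero_of_pos_of_lt k.two_pow_pos
    (Nat.two_pow_lt_three_mul_two_pow hk) hdiag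

lemma eq_of_levelEdge_eq (hk : k ≤ n) (hk' : k' ≤ n) {j j' : ℕ}
    (h : levelEdge n k j = levelEdge n k' j') : k = k' := by
  rw [levelEdge_eq, levelEdge_eq] at h
  rcases Sym2.eq_or_add_eq_zero_of_mk_add_eq h with h | h
  · rw [ZMod.natCast_eq_natCast_iff', Nat.mod_eq_of_lt (Nat.two_pow_lt_three_mul_two_pow hk),
      Nat.mod_eq_of_lt (Nat.two_pow_lt_three_mul_two_pow hk')] at h
    exact Nat.pow_right_injective le_rfl h
  · -- `0 < 2^k + 2^k' ≤ 2^(n+1) < 3·2^n`, so the sum cannot vanish.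
    rw [← Nat.cast_add] at h
    refine absurd h (ZMod.natCast_ne_zero_of_pos_of_lt (by positivity) ?_)
    have := Nat.pow_le_pow_right two_pos hk
    have := Nat.pow_le_pow_right two_pos hk'
    have := n.two_pow_pos
    omega

lemma exists_levelEdge_mem_cutEdgeSet (hk : k ≤ n) {X : Set (ZMod (3 * 2 ^ n))}
    (h0 : 0 ∈ X) (h2n : ((2 ^ n : ℕ) : ZMod (3 * 2 ^ n)) ∉ X) :
    ∃ j, levelEdge n k j ∈ cutEdgeSet (Gn n) X := by
  have hend : 2 ^ (n - k) * 2 ^ k = 2 ^ n := by rw [← pow_add, Nat.sub_add_cancel hk]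
  obtain ⟨j, hj, hjX, hj1X⟩ :=
    exists_lt_mem_and_succ_notMem (f := fun j => ((j * 2 ^ k : ℕ) : ZMod (3 * 2 ^ n)))
      (m := 2 ^ (n - k)) (by simpa using h0) (by simpa only [hend] using h2n)
  have hj3 : j < 3 * 2 ^ (n - k) := by omega
  exact ⟨j, levelEdge_mem_edgeSet hk hj3, _, _, rfl, hjX, hj1X⟩

lemma succ_le_ncard_cutEdgeSet {X : Set (ZMod (3 * 2 ^ n))}
    (h0 : 0 ∈ X) (h2n : ((2 ^ n : ℕ) : ZMod (3 * 2 ^ n)) ∉ X) :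
    n + 1 ≤ (cutEdgeSet (Gn n) X).ncard := by
  have hlevel : ∀ k, ∃ j, k ≤ n → levelEdge n k j ∈ cutEdgeSet (Gn n) X := fun k => by
    by_cases hk : k ≤ n
    · obtain ⟨j, hj⟩ := exists_levelEdge_mem_cutEdgeSet hk h0 h2n
      exact ⟨j, fun _ => hj⟩
    · exact ⟨0, fun hk' => absurd hk' hk⟩
  choose j hj using hlevel
  calc n + 1 = (Set.Iic n).ncard := by simp
    _ ≤ (cutEdgeSet (Gn n) X).ncard :=
      Set.ncard_le_ncard_of_injOn (fun k => levelEdge n k (j k)) (fun k hk => hj k hk)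
        (fun k hk k' hk' h => eq_of_levelEdge_eq hk hk' h) (Set.toFinite _)

end Gn

theorem stmt10 :
    ∃ c : ℝ, 0 < c ∧
      ∀ n : ℕ, 1 ≤ n →
        ∀ T : SimpleGraph (ZMod (3 * 2 ^ n)), T ≤ Gn n → T.IsTree →
          ∃ e ∈ T.edgeSet, ∃ a b : ZMod (3 * 2 ^ n), e = s(a, b) ∧
            c * (n : ℝ) ≤ ((cutEdgeSet (Gn n) (fundCut T a e)).ncard : ℝ) := by
  refine ⟨1, one_pos, fun n _ T _ hT => ?_⟩
  have hne : (0 : ZMod (3 * 2 ^ n)) ≠ ((2 ^ n : ℕ) : ZMod (3 * 2 ^ n)) :=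
    (ZMod.natCast_ne_zero_of_pos_of_lt n.two_pow_pos
      (Nat.two_pow_lt_three_mul_two_pow le_rfl)).symm
  obtain ⟨c, hadj, hsep⟩ :=
    hT.isAcyclic.exists_adj_notMem_fundCut (hT.connected.preconnected _ _) hne
  refine ⟨s(0, c), hadj, 0, c, rfl, ?_⟩
  have hcard := Gn.succ_le_ncard_cutEdgeSet (Reachable.refl 0) hsep
  rw [one_mul]
  exact_mod_cast n.le_succ.trans hcard
end
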